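/- arXiv:1112.3423 — 3 statements merged into one kernel-verified Lean document; each statement's English description precedes it below -/
import Mathlib

section
/- Let V be a dissipative quadratic stochastic operator on S^{m-1} with coefficients p_{ij,k}. Then for every i ∈ {1,…,m} there exists k ∈ {1,…,m} such that p_{ii,k} = 1 and p_{ii,l} = 0 for all l ≠ k; equivalently, the image Ve_i of the i-th vertex of the simplex is itself a vertex of the simplex. -/
open Finset Filter Topology

/-- `Majorizes y x` means `x ≺ y`: for every `k`, the sum of the `k` largest components of
`x` is at most the sum of the `k` largest components of `y`.  This is expressed via the
standard equivalent form: every subset-sum of `x` is dominated by some subset-sum of `y`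
over a subset of the same cardinality (the maximum of the latter over subsets of
cardinality `k` being exactly the sum of the `k` largest components of `y`). -/
def Majorizes {m : ℕ} (y x : Fin m → ℝ) : Prop :=
  ∀ A : Finset (Fin m), ∃ B : Finset (Fin m),
    B.card = A.card ∧ ∑ i ∈ A, x i ≤ ∑ i ∈ B, y i

/-- The quadratic operator `(Vx)_k = ∑_{i,j} p_{ij,k} x_i x_j` with heredity
coefficients `p`. -/
def QSO {m : ℕ} (p : Fin m → Fin m → Fin m → ℝ) (x : Fin m → ℝ) : Fin m → ℝ :=
  fun k => ∑ i, ∑ j, p i j k * x i * x j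

/-- Conditions on heredity coefficients: symmetry, nonnegativity, stochasticity. -/
def IsQSOCoeff {m : ℕ} (p : Fin m → Fin m → Fin m → ℝ) : Prop :=
  (∀ i j k, p i j k = p j i k) ∧ (∀ i j k, 0 ≤ p i j k) ∧ (∀ i j, ∑ k, p i j k = 1)

/-- Dissipativity of the q.s.o.: `V x ≻ x` for every `x` in the simplex. -/
def IsDissipative {m : ℕ} (p : Fin m → Fin m → Fin m → ℝ) : Prop :=
  ∀ x ∈ stdSimplex ℝ (Fin m), Majorizes (QSO p x) x

/-- The `k`-th vertex of the simplex (the `k`-th standard basis vector). -/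
def vertex {m : ℕ} (k : Fin m) : Fin m → ℝ := fun j => if j = k then 1 else 0

/-- The ω-limit set of the trajectory of `x` under `V`: the set of all limit points of
the sequence `(Vⁿ x)ₙ`. -/
def omegaLimitSet {m : ℕ} (V : (Fin m → ℝ) → Fin m → ℝ) (x : Fin m → ℝ) :
    Set (Fin m → ℝ) :=
  {y | ∃ φ : ℕ → ℕ, StrictMono φ ∧ Tendsto (fun n => V^[φ n] x) atTop (𝓝 y)}

/-
Dissipativity at the vertex `eᵢ`, applied to the one-element subset `{i}`, gives a coordinate
of `V eᵢ = (p_{ii,k})ₖ` that is at least `1`. A point of the simplex with a coordinate `≥ 1`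
is the corresponding vertex.
-/

lemma vertex_eq_single {m : ℕ} (k : Fin m) : vertex k = Pi.single k 1 := by
  funext j
  simp [vertex, Pi.single_apply]

lemma vertex_mem_stdSimplex {m : ℕ} (k : Fin m) : vertex k ∈ stdSimplex ℝ (Fin m) := by
  rw [vertex_eq_single]
  exact single_mem_stdSimplex ℝ k

lemma eq_vertex_of_mem_stdSimplex_of_one_le {m : ℕ} {x : Fin m → ℝ}
    (hx : x ∈ stdSimplex ℝ (Fin m)) {k : Fin m} (hk : 1 ≤ x k) : x = vertex k := by
  obtain ⟨hnonneg, hsum⟩ := hx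
  have hsplit := add_sum_erase univ x (mem_univ k)
  have hrest : ∑ j ∈ univ.erase k, x j = 0 :=
    le_antisymm (by linarith) (sum_nonneg fun j _ => hnonneg j)
  funext l
  by_cases hl : l = k
  · subst hl
    rw [vertex, if_pos rfl]
    linarith
  · rw [vertex, if_neg hl]
    exact (sum_eq_zero_iff_of_nonneg fun j _ => hnonneg j).mp hrest l (by simp [hl])

lemma Majorizes.exists_apply_le {m : ℕ} {x y : Fin m → ℝ} (h : Majorizes y x) (i : Fin m) :
    ∃ k, x i ≤ y k := by
  obtain ⟨B, hB, hle⟩ := h {i}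
  obtain ⟨k, rfl⟩ := card_eq_one.mp hB
  exact ⟨k, by simpa using hle⟩

lemma qso_vertex {m : ℕ} (p : Fin m → Fin m → Fin m → ℝ) (i : Fin m) :
    QSO p (vertex i) = p i i := by
  funext k
  simp [QSO, vertex]

/-- for a dissipative q.s.o., each `V eᵢ` is a vertex: there is `k` with
`p_{ii,k} = 1` and `p_{ii,l} = 0` for `l ≠ k`. -/
theorem stmt0 {m : ℕ} (p : Fin m → Fin m → Fin m → ℝ)
    (hp : IsQSOCoeff p) (hd : IsDissipative p) :
    ∀ i : Fin m, ∃ k : Fin m,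
      p i i k = 1 ∧ (∀ l : Fin m, l ≠ k → p i i l = 0) ∧
      QSO p (vertex i) = vertex k := by
  obtain ⟨-, hnonneg, hsum⟩ := hp
  intro i
  obtain ⟨k, hk⟩ := (hd _ (vertex_mem_stdSimplex i)).exists_apply_le i
  rw [qso_vertex] at hk
  have hpk : p i i = vertex k :=
    eq_vertex_of_mem_stdSimplex_of_one_le ⟨hnonneg i i, hsum i i⟩ (by simpa [vertex] using hk)
  exact ⟨k, by simp [hpk, vertex], fun l hl => by simp [hpk, vertex, hl], by rw [qso_vertex, hpk]⟩
end

section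
/- Let m ≥ 3 and let V be a dissipative quadratic stochastic operator on S^{m-1} with coefficients p_{ij,k}. Then for all i, j ∈ {1,…,m} the vector (p_{ij,1}, …, p_{ij,m}) has at most two nonzero components; equivalently, there exist indices k₁ ≠ k₂ with p_{ij,k₁} + p_{ij,k₂} = 1. -/
open Finset Filter Topology

/-! Test dissipativity at the midpoint `x = (eᵢ + eⱼ)/2` of an edge of the simplex: its mass sits
on `{i, j}`, so some set `B` of at most two coordinates of `V x` carries total mass `≥ 1`, which
forces `V x` to vanish off `B`. As `(V x)ₖ ≥ p i j k · xᵢ · xⱼ` with `xᵢ xⱼ > 0`, the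
coefficients `p i j ·` vanish off `B` too. -/

section Simplex

variable {ι : Type*} [Fintype ι] [DecidableEq ι]

theorem eq_zero_of_one_le_sum_of_mem_stdSimplex {y : ι → ℝ} (hy : y ∈ stdSimplex ℝ ι)
    {B : Finset ι} (hB : 1 ≤ ∑ k ∈ B, y k) {k : ι} (hk : k ∉ B) : y k = 0 := by
  have hsplit := sum_add_sum_compl B y
  rw [hy.2] at hsplit
  have hcompl : ∑ l ∈ Bᶜ, y l = 0 :=
    le_antisymm (by linarith) (sum_nonneg fun l _ => hy.1 l)
  exact (sum_eq_zero_iff_of_nonneg fun l _ => hy.1 l).1 hcompl k (mem_compl.2 hk)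

theorem exists_ne_add_eq_sum_of_card_support_le_two (q : ι → ℝ) (hι : 2 ≤ Fintype.card ι)
    (hq : #{k | q k ≠ 0} ≤ 2) : ∃ k₁ k₂, k₁ ≠ k₂ ∧ q k₁ + q k₂ = ∑ k, q k := by
  obtain ⟨C, hsupp, hC⟩ := exists_superset_card_eq hq hι
  obtain ⟨k₁, k₂, hne, rfl⟩ := card_eq_two.1 hC
  refine ⟨k₁, k₂, hne, ?_⟩
  rw [← sum_pair hne]
  exact sum_subset (subset_univ _) fun k _ hk => by_contra fun h => hk (hsupp (by simpa using h))

end Simplex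

section QSO

variable {m : ℕ} {p : Fin m → Fin m → Fin m → ℝ} {x : Fin m → ℝ}

theorem QSO_mem_stdSimplex (hp : IsQSOCoeff p) (hx : x ∈ stdSimplex ℝ (Fin m)) :
    QSO p x ∈ stdSimplex ℝ (Fin m) := by
  refine ⟨fun k => sum_nonneg fun i _ => sum_nonneg fun j _ =>
    mul_nonneg (mul_nonneg (hp.2.1 i j k) (hx.1 i)) (hx.1 j), ?_⟩
  calc ∑ k, QSO p x k = ∑ i, ∑ j, (∑ k, p i j k) * (x i * x j) := by
        simp only [QSO, sum_mul]
        rw [sum_comm]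
        refine sum_congr rfl fun i _ => ?_
        rw [sum_comm]
        exact sum_congr rfl fun j _ => sum_congr rfl fun k _ => by ring
    _ = (∑ i, x i) * ∑ j, x j := by simp only [hp.2.2, one_mul, sum_mul_sum]
    _ = 1 := by rw [hx.2, one_mul]

theorem support_coeff_subset_support_QSO (hp : IsQSOCoeff p) (hx : x ∈ stdSimplex ℝ (Fin m))
    {i j : Fin m} (hi : 0 < x i) (hj : 0 < x j) :
    Function.support (p i j) ⊆ Function.support (QSO p x) := by
  intro k hk
  have hnonneg : ∀ a b, 0 ≤ p a b k * x a * x b := fun a b =>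
    mul_nonneg (mul_nonneg (hp.2.1 a b k) (hx.1 a)) (hx.1 b)
  have hterm : p i j k * x i * x j ≤ QSO p x k :=
    calc p i j k * x i * x j ≤ ∑ b, p i b k * x i * x b :=
          single_le_sum (fun b _ => hnonneg i b) (mem_univ j)
      _ ≤ QSO p x k :=
          single_le_sum (f := fun a => ∑ b, p a b k * x a * x b)
            (fun a _ => sum_nonneg fun b _ => hnonneg a b) (mem_univ i)
  have hpos : 0 < p i j k * x i * x j :=
    mul_pos (mul_pos (lt_of_le_of_ne (hp.2.1 i j k) (Ne.symm hk)) hi) hj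
  exact (hpos.trans_le hterm).ne'

theorem IsDissipative.exists_support_QSO_subset (hp : IsQSOCoeff p) (hd : IsDissipative p)
    (hx : x ∈ stdSimplex ℝ (Fin m)) {A : Finset (Fin m)} (hA : Function.support x ⊆ A) :
    ∃ B : Finset (Fin m), #B = #A ∧ Function.support (QSO p x) ⊆ B := by
  obtain ⟨B, hBcard, hB⟩ := hd x hx A
  have hxA : ∑ k ∈ A, x k = 1 := by
    rw [← hx.2]
    exact sum_subset (subset_univ A) fun k _ hk => Function.notMem_support.1 fun h => hk (hA h)
  refine ⟨B, hBcard, fun k hk => by_contra fun hkB => hk ?_⟩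
  exact eq_zero_of_one_le_sum_of_mem_stdSimplex (QSO_mem_stdSimplex hp hx) (hxA ▸ hB) hkB

end QSO

/-- for `m ≥ 3` and a dissipative q.s.o., each vector
`(p_{ij,1}, …, p_{ij,m})` has at most two nonzero components; equivalently two of its
components already sum to `1`. -/
theorem stmt2 {m : ℕ} (hm : 3 ≤ m) (p : Fin m → Fin m → Fin m → ℝ)
    (hp : IsQSOCoeff p) (hd : IsDissipative p) :
    ∀ i j : Fin m,
      (Finset.univ.filter fun k => p i j k ≠ 0).card ≤ 2 ∧
      ∃ k₁ k₂ : Fin m, k₁ ≠ k₂ ∧ p i j k₁ + p i j k₂ = 1 := by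
  intro i j
  set x : Fin m → ℝ := (1 / 2 : ℝ) • Pi.single i 1 + (1 / 2 : ℝ) • Pi.single j 1
  have hx : x ∈ stdSimplex ℝ (Fin m) :=
    convex_stdSimplex ℝ _ (single_mem_stdSimplex ℝ i) (single_mem_stdSimplex ℝ j)
      (by norm_num) (by norm_num) (by norm_num)
  have hxA : Function.support x ⊆ ({i, j} : Finset (Fin m)) := by
    intro k hk
    by_contra hkij
    simp_all [x, Pi.single_apply]
  have hxi : 0 < x i := by simp [x, Pi.single_apply]; positivity
  have hxj : 0 < x j := by simp [x, Pi.single_apply]; positivity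
  obtain ⟨B, hBcard, hB⟩ := hd.exists_support_QSO_subset hp hx hxA
  have hsupp := (support_coeff_subset_support_QSO hp hx hxi hxj).trans hB
  have hcard : #{k | p i j k ≠ 0} ≤ 2 :=
    calc #{k | p i j k ≠ 0} ≤ #B := card_le_card fun k hk => hsupp (by simpa using hk)
      _ = #{i, j} := hBcard
      _ ≤ 2 := card_le_two
  refine ⟨hcard, ?_⟩
  simpa [hp.2.2 i j] using
    exists_ne_add_eq_sum_of_card_support_le_two (p i j) (by rw [Fintype.card_fin]; omega) hcard
end

section
/- Let A be an m × m real matrix such that Ax ∈ S^{m-1} for every x ∈ S^{m-1}, and suppose Ax ≻ x for all x ∈ S^{m-1}. Then either A is a permutation matrix, or there exists a proper nonempty subset β ⊊ {1,…,m} such that A maps the whole simplex into the proper face F_β = {x ∈ S^{m-1} : x_i = 0 for i ∉ β}. -/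
open Finset Filter Topology

/-! Majorization at a vertex `e j` forces some coordinate of `A e j` to be at least `1`, and a
point of the simplex with such a coordinate is a vertex. Hence every column of `A` is a vertex
`e (σ j)`: `A` is a permutation matrix when `σ` is injective, and otherwise maps the simplex into
the proper face spanned by the range of `σ`. -/

theorem eq_single_of_mem_stdSimplex_of_one_le {𝕜 ι : Type*} [Ring 𝕜] [PartialOrder 𝕜]
    [IsOrderedAddMonoid 𝕜] [Fintype ι] [DecidableEq ι] {y : ι → 𝕜}
    (hy : y ∈ stdSimplex 𝕜 ι) {k : ι} (hk : 1 ≤ y k) : y = Pi.single k 1 := by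
  have hyk : y k = 1 := le_antisymm (mem_Icc_of_mem_stdSimplex hy k).2 hk
  have hrest : ∑ i ∈ univ.erase k, y i = 0 := by
    have := add_sum_erase univ y (mem_univ k)
    rw [hy.2, hyk] at this
    simpa using this
  ext i
  rcases eq_or_ne i k with rfl | hik
  · simpa using hyk
  · rw [Pi.single_eq_of_ne hik]
    exact (sum_eq_zero_iff_of_nonneg fun j _ => hy.1 j).mp hrest i
      (mem_erase.mpr ⟨hik, mem_univ i⟩)

theorem exists_eq_single_of_majorizes_single {m : ℕ} {y : Fin m → ℝ}
    (hy : y ∈ stdSimplex ℝ (Fin m)) {j : Fin m} (h : Majorizes y (Pi.single j 1)) :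
    ∃ k, y = Pi.single k 1 := by
  obtain ⟨B, hBcard, hBsum⟩ := h {j}
  obtain ⟨k, rfl⟩ := card_eq_one.mp (hBcard.trans (card_singleton j))
  exact ⟨k, eq_single_of_mem_stdSimplex_of_one_le hy (by simpa using hBsum)⟩

namespace Matrix

theorem exists_eq_ite_of_mulVec_single {R n : Type*} [Fintype n] [DecidableEq n]
    [NonAssocSemiring R] {A : Matrix n n R}
    (hA : ∀ j, ∃ k, A *ᵥ Pi.single j 1 = Pi.single k 1) :
    ∃ σ : n → n, ∀ i j, A i j = if i = σ j then 1 else 0 := by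
  choose σ hσ using hA
  refine ⟨σ, fun i j => ?_⟩
  rw [← Pi.single_apply, ← hσ j, mulVec_single_one, col_apply]

theorem mulVec_apply_eq_zero_of_notMem_range {R n : Type*} [Fintype n] [DecidableEq n]
    [NonAssocSemiring R] {A : Matrix n n R} {σ : n → n}
    (hA : ∀ i j, A i j = if i = σ j then 1 else 0) (x : n → R) {i : n}
    (hi : i ∉ Set.range σ) : (A *ᵥ x) i = 0 := by
  refine sum_eq_zero fun j _ => ?_
  change A i j * x j = 0
  rw [hA, if_neg fun h => hi ⟨j, h.symm⟩, zero_mul]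

end Matrix

/-- a linear operator mapping the simplex into itself with `Ax ≻ x` on the
simplex is either a permutation matrix or maps the whole simplex into a proper face. -/
theorem stmt13 {m : ℕ} (A : Matrix (Fin m) (Fin m) ℝ)
    (h1 : ∀ x ∈ stdSimplex ℝ (Fin m), A.mulVec x ∈ stdSimplex ℝ (Fin m))
    (h2 : ∀ x ∈ stdSimplex ℝ (Fin m), Majorizes (A.mulVec x) x) :
    (∃ σ : Equiv.Perm (Fin m), ∀ i j : Fin m, A i j = if i = σ j then 1 else 0) ∨
    (∃ β : Finset (Fin m), β.Nonempty ∧ β ≠ Finset.univ ∧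
      ∀ x ∈ stdSimplex ℝ (Fin m),
        A.mulVec x ∈ stdSimplex ℝ (Fin m) ∧ ∀ i ∉ β, A.mulVec x i = 0) := by
  obtain ⟨σ, hσ⟩ := Matrix.exists_eq_ite_of_mulVec_single fun j =>
    exists_eq_single_of_majorizes_single (h1 _ (single_mem_stdSimplex ℝ j))
      (h2 _ (single_mem_stdSimplex ℝ j))
  by_cases hσinj : σ.Injective
  · exact Or.inl ⟨Equiv.ofBijective σ hσinj.bijective_of_finite, hσ⟩
  obtain ⟨j, -⟩ := Function.not_injective_iff.mp hσinj
  refine Or.inr ⟨univ.image σ, image_nonempty.mpr ⟨j, mem_univ j⟩, fun himage => ?_,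
    fun x hx => ⟨h1 x hx, fun i hi => ?_⟩⟩
  · exact hσinj (Finite.injective_iff_surjective.mpr fun i => by
      simpa using eq_univ_iff_forall.mp himage i)
  · exact Matrix.mulVec_apply_eq_zero_of_notMem_range hσ x (by simpa using hi)
end
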